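/- A finite-dimensional Lie algebra L of dimension n over a field is abelian if and only if dim M(L) = n(n−1)/2. -/

import Mathlib

open Module

instance Prod.instLieRingBracket (L M : Type*) [LieRing L] [LieRing M] :
    Bracket (L × M) (L × M) :=
  ⟨fun x y => (⁅x.1, y.1⁆, ⁅x.2, y.2⁆)⟩

/-- Direct sum (product) of two Lie rings. -/
instance Prod.instLieRing (L M : Type*) [LieRing L] [LieRing M] : LieRing (L × M) where
  add_lie x y z := by ext <;> simp [Bracket.bracket, add_lie]
  lie_add x y z := by ext <;> simp [Bracket.bracket, lie_add]
  lie_self x := by ext <;> simp [Bracket.bracket]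
  leibniz_lie x y z := by ext <;> simp [Bracket.bracket]

instance Prod.instLieAlgebra (k L M : Type*) [CommRing k] [LieRing L] [LieRing M]
    [LieAlgebra k L] [LieAlgebra k M] : LieAlgebra k (L × M) where
  lie_smul t x y := by ext <;> simp [Bracket.bracket, lie_smul]

section Schur
variable (k : Type*) [Field k] (L : Type*) [LieRing L] [LieAlgebra k L]

/-- The canonical free presentation map `FreeLieAlgebra k L → L`. -/
noncomputable def presPi : FreeLieAlgebra k L →ₗ⁅k⁆ L := FreeLieAlgebra.lift k id

/-- `R ∩ F²` for the canonical free presentation `0 → R → F → L → 0`. -/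
noncomputable def multNum : LieIdeal k (FreeLieAlgebra k L) :=
  (presPi k L).ker ⊓ ⁅(⊤ : LieIdeal k (FreeLieAlgebra k L)), (⊤ : LieIdeal k (FreeLieAlgebra k L))⁆

/-- `[R, F]` for the canonical free presentation. -/
noncomputable def multDen : LieIdeal k (FreeLieAlgebra k L) :=
  ⁅(presPi k L).ker, (⊤ : LieIdeal k (FreeLieAlgebra k L))⁆

/-- The Schur multiplier `M(L) = (R ∩ F²)/[R,F]`, as a Lie algebra (it is abelian). -/
noncomputable def schurMultiplier :=
  (↥(multNum k L)) ⧸ (LieIdeal.comap ((multNum k L) : LieSubalgebra k (FreeLieAlgebra k L)).incl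
    (multDen k L))

noncomputable instance : LieRing (schurMultiplier k L) := by unfold schurMultiplier; infer_instance
noncomputable instance : LieAlgebra k (schurMultiplier k L) := by
  unfold schurMultiplier; infer_instance
noncomputable instance : Module k (schurMultiplier k L) := by
  unfold schurMultiplier; infer_instance

/-- dim M(L). -/
noncomputable def schurMultDim : ℕ := Module.finrank k (schurMultiplier k L)

/-- The derived subalgebra `L² = [L,L]` as an ideal. -/
noncomputable def derivedIdeal : LieIdeal k L := ⁅(⊤ : LieIdeal k L), (⊤ : LieIdeal k L)⁆

end Schur

/-!
Let `F → L` be the free presentation with kernel `R` and put `Q = F/[R,F]`. As `R/[R,F]` is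
central in `Q`, the bracket of lifts gives an alternating map `L × L → Q`, hence a linear map
`⋀²L → Q` whose image is the image of `F²`; the Schur multiplier `(R ∩ F²)/[R,F]` is a subspace of
that image lying in the kernel of `Q → L`. So `dim M(L) ≤ dim ⋀²L = n(n-1)/2`, and in case of
equality `M(L)` is the whole image of `F²`, whence every bracket `[x, y]`, the image of the class of
`[x̃, ỹ]`, vanishes. Conversely, if `L` is abelian, `x ∧ y` is a 2-cocycle with trivial
coefficients; `F` maps to the corresponding central extension of `L` by `⋀²L`, which kills `[R,F]`
and so yields a left inverse of `⋀²L → Q`, while all brackets `[x̃, ỹ]` lie in `R ∩ F²`. Hence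
`dim M(L) = dim ⋀²L`.
-/

namespace LinearMap

variable {R M N : Type*} [CommRing R] [AddCommGroup M] [Module R M] [AddCommGroup N] [Module R N]

def toAlternatingMapFinTwo (B : M →ₗ[R] M →ₗ[R] N) (hB : ∀ x, B x x = 0) :
    M [⋀^Fin 2]→ₗ[R] N where
  toMultilinearMap :=
    ((MultilinearMap.ofSubsingletonₗ R R M N (0 : Fin 1)).toLinearMap ∘ₗ B).uncurryLeft
  map_eq_zero_of_eq' v i j hv hij := by
    fin_cases i <;> fin_cases j <;> simp_all [LinearMap.uncurryLeft_apply, Fin.tail]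

@[simp]
lemma toAlternatingMapFinTwo_apply (B : M →ₗ[R] M →ₗ[R] N) (hB : ∀ x, B x x = 0) (v : Fin 2 → M) :
    toAlternatingMapFinTwo B hB v = B (v 0) (v 1) := rfl

end LinearMap

namespace LieAlgebra

open LieModule.Cohomology

variable {R L M : Type*} [CommRing R] [LieRing L] [LieAlgebra R L] [AddCommGroup M] [Module R M]
  [LieRingModule L M] [LieModule R L M]

lemma mem_twoCocycle_of_isLieAbelian [IsLieAbelian L] [LieModule.IsTrivial L M]
    (a : twoCochain R L M) : a ∈ twoCocycle R L M :=
  (mem_twoCocycle_iff_of_trivial (a := a)).2 fun x y z => by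
    simp only [trivial_lie_zero, map_zero, LinearMap.zero_apply, add_zero]

variable (c : twoCocycle R L M)

def ofTwoCocycleProj : ofTwoCocycle c →ₗ⁅R⁆ L where
  toFun x := ((ofProd c).symm x).1
  map_add' _ _ := rfl
  map_smul' _ _ := rfl
  map_lie' := rfl

def ofTwoCocycleSnd : ofTwoCocycle c →ₗ[R] M where
  toFun x := ((ofProd c).symm x).2
  map_add' _ _ := rfl
  map_smul' _ _ := rfl

lemma ofTwoCocycle_lie_eq_zero_of_proj_eq_zero [LieModule.IsTrivial L M] {x : ofTwoCocycle c}
    (hx : ofTwoCocycleProj c x = 0) (y : ofTwoCocycle c) : ⁅x, y⁆ = 0 := by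
  change ((ofProd c).symm x).1 = 0 at hx
  simp only [bracket_ofTwoCocycle, hx, zero_lie, map_zero, LinearMap.zero_apply, trivial_lie_zero,
    sub_zero, add_zero]
  rfl

lemma ofTwoCocycleSnd_lie [LieModule.IsTrivial L M] (x y : ofTwoCocycle c) :
    ofTwoCocycleSnd c ⁅x, y⁆ = c.1 (ofTwoCocycleProj c x) (ofTwoCocycleProj c y) := by
  simp only [bracket_ofTwoCocycle, trivial_lie_zero, add_zero, sub_zero]
  rfl

end LieAlgebra

namespace SchurMultiplier

open LieModule.Cohomology

variable {k : Type*} [Field k] {L : Type*} [LieRing L] [LieAlgebra k L]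

@[simp]
lemma presPi_of (x : L) : presPi k L (FreeLieAlgebra.of k x) = x := by
  simp [presPi]

variable (k L) in
abbrev CoverQuot := FreeLieAlgebra k L ⧸ (multDen k L).toSubmodule

variable (k L) in
noncomputable def coverMk : FreeLieAlgebra k L →ₗ[k] CoverQuot k L :=
  (multDen k L).toSubmodule.mkQ

lemma coverMk_eq_zero {f : FreeLieAlgebra k L} : coverMk k L f = 0 ↔ f ∈ multDen k L :=
  Submodule.Quotient.mk_eq_zero _

lemma coverMk_lie_eq_zero {a : FreeLieAlgebra k L} (ha : presPi k L a = 0)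
    (c : FreeLieAlgebra k L) : coverMk k L ⁅a, c⁆ = 0 :=
  coverMk_eq_zero.2 <|
    LieSubmodule.lie_mem_lie (LieHom.mem_ker.2 ha) (LieSubmodule.mem_top c)

lemma coverMk_lie_congr_left {a a' : FreeLieAlgebra k L} (h : presPi k L a = presPi k L a')
    (c : FreeLieAlgebra k L) : coverMk k L ⁅a, c⁆ = coverMk k L ⁅a', c⁆ := by
  rw [← sub_eq_zero, ← map_sub, ← sub_lie]
  exact coverMk_lie_eq_zero (by rw [map_sub, h, sub_self]) c

lemma coverMk_lie_congr_right {a a' : FreeLieAlgebra k L} (h : presPi k L a = presPi k L a')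
    (c : FreeLieAlgebra k L) : coverMk k L ⁅c, a⁆ = coverMk k L ⁅c, a'⁆ := by
  rw [← lie_skew c a, ← lie_skew c a', map_neg, map_neg, coverMk_lie_congr_left h]

variable (k L) in
/-- `R/[R,F]` is central in `F/[R,F]`, so the bracket of two lifts only depends on their
images in `L`. -/
noncomputable def commutatorMap : L →ₗ[k] L →ₗ[k] CoverQuot k L :=
  LinearMap.mk₂ k (fun x y => coverMk k L ⁅FreeLieAlgebra.of k x, FreeLieAlgebra.of k y⁆)
    (fun x x' y => by
      rw [coverMk_lie_congr_left (a' := .of k x + .of k x') (by simp), add_lie, map_add])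
    (fun c x y => by
      rw [coverMk_lie_congr_left (a' := c • .of k x) (by simp), smul_lie, map_smul])
    (fun x y y' => by
      rw [coverMk_lie_congr_right (a' := .of k y + .of k y') (by simp), lie_add, map_add])
    (fun c x y => by
      rw [coverMk_lie_congr_right (a' := c • .of k y) (by simp), lie_smul, map_smul])

lemma commutatorMap_apply (x y : L) :
    commutatorMap k L x y = coverMk k L ⁅FreeLieAlgebra.of k x, FreeLieAlgebra.of k y⁆ := rfl

lemma commutatorMap_self (x : L) : commutatorMap k L x x = 0 := by
  rw [commutatorMap_apply, lie_self, map_zero]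

lemma coverMk_lie (f g : FreeLieAlgebra k L) :
    coverMk k L ⁅f, g⁆ = commutatorMap k L (presPi k L f) (presPi k L g) := by
  rw [commutatorMap_apply, coverMk_lie_congr_left (a' := .of k (presPi k L f)) (by simp),
    coverMk_lie_congr_right (a' := .of k (presPi k L g)) (by simp)]

variable (k L) in
noncomputable def commutatorWedge : ⋀[k]^2 L →ₗ[k] CoverQuot k L :=
  exteriorPower.alternatingMapLinearEquiv
    ((commutatorMap k L).toAlternatingMapFinTwo commutatorMap_self)

@[simp]
lemma commutatorWedge_ιMulti (v : Fin 2 → L) :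
    commutatorWedge k L (exteriorPower.ιMulti k 2 v) = commutatorMap k L (v 0) (v 1) := by
  simp [commutatorWedge]

variable (k L) in
noncomputable def coverProj : CoverQuot k L →ₗ[k] L :=
  (multDen k L).toSubmodule.liftQ (presPi k L).toLinearMap fun _ hx =>
    LieSubmodule.lie_le_left _ _ hx

@[simp]
lemma coverProj_coverMk (f : FreeLieAlgebra k L) : coverProj k L (coverMk k L f) = presPi k L f :=
  rfl

lemma coverProj_commutatorMap (x y : L) : coverProj k L (commutatorMap k L x y) = ⁅x, y⁆ := by
  rw [commutatorMap_apply, coverProj_coverMk, LieHom.map_lie, presPi_of, presPi_of]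

variable (k L) in
noncomputable def schurImage : Submodule k (CoverQuot k L) :=
  (multNum k L).toSubmodule.map (coverMk k L)

lemma schurMultDim_eq_finrank_schurImage :
    schurMultDim k L = finrank k (schurImage k L) := by
  let g : ((multNum k L) : LieSubalgebra k (FreeLieAlgebra k L)) →ₗ[k] CoverQuot k L :=
    coverMk k L ∘ₗ (multNum k L).toSubmodule.subtype
  have hker : LinearMap.ker g = (LieIdeal.comap
      ((multNum k L) : LieSubalgebra k (FreeLieAlgebra k L)).incl (multDen k L)).toSubmodule := by
    ext x
    exact coverMk_eq_zero
  have hrange : LinearMap.range g = schurImage k L := by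
    ext z
    constructor
    · rintro ⟨f, rfl⟩
      exact ⟨f, f.2, rfl⟩
    · rintro ⟨f, hf, rfl⟩
      exact ⟨⟨f, hf⟩, rfl⟩
  unfold schurMultDim schurMultiplier
  exact ((Submodule.quotEquivOfEq _ _ hker.symm).trans
    (g.quotKerEquivRange.trans (LinearEquiv.ofEq _ _ hrange))).finrank_eq

lemma schurImage_le_range_commutatorWedge :
    schurImage k L ≤ LinearMap.range (commutatorWedge k L) := by
  have hderived : (multNum k L).toSubmodule ≤
      (⁅(⊤ : LieIdeal k (FreeLieAlgebra k L)), ⊤⁆ : LieIdeal k (FreeLieAlgebra k L)).toSubmodule :=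
    fun _ hx => ((LieSubmodule.mem_inf _ _ _).1 hx).2
  refine (Submodule.map_mono hderived).trans ?_
  rw [LieSubmodule.lieIdeal_oper_eq_linear_span', Submodule.map_span, Submodule.span_le]
  rintro - ⟨-, ⟨f, -, g, -, rfl⟩, rfl⟩
  refine ⟨exteriorPower.ιMulti k 2 ![presPi k L f, presPi k L g], ?_⟩
  simp [coverMk_lie]

lemma schurImage_le_ker_coverProj : schurImage k L ≤ LinearMap.ker (coverProj k L) := by
  rintro - ⟨f, hf, rfl⟩
  exact LieHom.mem_ker.1 ((LieSubmodule.mem_inf _ _ _).1 hf).1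

section Abelian

variable [IsLieAbelian L]

open LieAlgebra

lemma range_commutatorWedge_le_schurImage :
    LinearMap.range (commutatorWedge k L) ≤ schurImage k L := by
  rw [LinearMap.range_eq_map, ← exteriorPower.ιMulti_span, Submodule.map_span, Submodule.span_le]
  rintro - ⟨-, ⟨v, rfl⟩, rfl⟩
  refine ⟨⁅FreeLieAlgebra.of k (v 0), FreeLieAlgebra.of k (v 1)⁆,
    (LieSubmodule.mem_inf _ _ _).2 ⟨?_, LieSubmodule.lie_mem_lie trivial trivial⟩, ?_⟩
  · rw [LieHom.mem_ker, LieHom.map_lie, trivial_lie_zero]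
  · simp [commutatorMap_apply]

variable (k L) in
noncomputable def wedgeCocycle : twoCocycle k L (TrivialLieModule k L (ExteriorAlgebra k L)) :=
  ⟨⟨((LinearMap.mul k _).compl₁₂ (ExteriorAlgebra.ι k) (ExteriorAlgebra.ι k)).compr₂
      (TrivialLieModule.equiv k L _).symm.toLinearMap,
    fun x => by simp⟩, mem_twoCocycle_of_isLieAbelian _⟩

variable (k L) in
noncomputable def liftToWedgeExtension :
    FreeLieAlgebra k L →ₗ⁅k⁆ ofTwoCocycle (wedgeCocycle k L) :=
  FreeLieAlgebra.lift k fun x => ofProd _ (x, 0)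

lemma proj_liftToWedgeExtension :
    (ofTwoCocycleProj (wedgeCocycle k L)).comp (liftToWedgeExtension k L) = presPi k L :=
  FreeLieAlgebra.hom_ext fun x => by
    simp [liftToWedgeExtension]
    rfl

lemma multDen_le_ker_liftToWedgeExtension : multDen k L ≤ (liftToWedgeExtension k L).ker := by
  rw [multDen, LieSubmodule.lie_le_iff]
  intro r hr f _
  rw [LieHom.mem_ker, LieHom.map_lie]
  refine ofTwoCocycle_lie_eq_zero_of_proj_eq_zero _ ?_ _
  rw [← LieHom.comp_apply, proj_liftToWedgeExtension]
  exact hr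

variable (k L) in
noncomputable def wedgeRetraction : CoverQuot k L →ₗ[k] ExteriorAlgebra k L :=
  (multDen k L).toSubmodule.liftQ
    ((TrivialLieModule.equiv k L _).toLinearMap ∘ₗ ofTwoCocycleSnd (wedgeCocycle k L) ∘ₗ
      (liftToWedgeExtension k L).toLinearMap)
    fun _ hf => by simp [LieHom.mem_ker.1 (multDen_le_ker_liftToWedgeExtension hf)]

lemma wedgeRetraction_commutatorMap (x y : L) :
    wedgeRetraction k L (commutatorMap k L x y) =
      ExteriorAlgebra.ι k x * ExteriorAlgebra.ι k y := by
  have hproj (z : L) : ofTwoCocycleProj (wedgeCocycle k L)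
      (liftToWedgeExtension k L (FreeLieAlgebra.of k z)) = z := by
    rw [← LieHom.comp_apply, proj_liftToWedgeExtension, presPi_of]
  change TrivialLieModule.equiv k L _ (ofTwoCocycleSnd _ (liftToWedgeExtension k L ⁅_, _⁆)) = _
  rw [LieHom.map_lie, ofTwoCocycleSnd_lie, hproj, hproj]
  rfl

lemma wedgeRetraction_commutatorWedge (w : ⋀[k]^2 L) :
    wedgeRetraction k L (commutatorWedge k L w) = w := by
  change (wedgeRetraction k L ∘ₗ commutatorWedge k L) w = (⋀[k]^2 L).subtype w
  congr 1
  ext v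
  simp [wedgeRetraction_commutatorMap, Matrix.vecTail]

lemma commutatorWedge_injective : Function.Injective (commutatorWedge k L) := fun w w' h =>
  Subtype.ext <| by rw [← wedgeRetraction_commutatorWedge w, h, wedgeRetraction_commutatorWedge]

end Abelian

variable [FiniteDimensional k L]

lemma schurMultDim_eq_choose_two [IsLieAbelian L] :
    schurMultDim k L = (finrank k L).choose 2 := by
  rw [schurMultDim_eq_finrank_schurImage, ← exteriorPower.finrank_eq k 2,
    ← LinearMap.finrank_range_of_inj commutatorWedge_injective,
    le_antisymm schurImage_le_range_commutatorWedge range_commutatorWedge_le_schurImage]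

lemma isLieAbelian_of_schurMultDim_eq (h : schurMultDim k L = (finrank k L).choose 2) :
    IsLieAbelian L := by
  rw [schurMultDim_eq_finrank_schurImage, ← exteriorPower.finrank_eq k 2] at h
  have heq : schurImage k L = LinearMap.range (commutatorWedge k L) :=
    Submodule.eq_of_le_of_finrank_le schurImage_le_range_commutatorWedge
      (h ▸ LinearMap.finrank_range_le _)
  refine ⟨fun x y => ?_⟩
  have hmem : commutatorMap k L x y ∈ schurImage k L :=
    heq ▸ ⟨exteriorPower.ιMulti k 2 ![x, y], by simp⟩
  rw [← coverProj_commutatorMap (k := k)]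
  exact schurImage_le_ker_coverProj hmem

end SchurMultiplier

theorem stmt5 (k : Type*) [Field k] (L : Type*) [LieRing L] [LieAlgebra k L]
    [FiniteDimensional k L] (n : ℕ) (hn : finrank k L = n) :
    IsLieAbelian L ↔ schurMultDim k L = n * (n - 1) / 2 := by
  subst hn
  rw [← Nat.choose_two_right]
  exact ⟨fun _ => SchurMultiplier.schurMultDim_eq_choose_two,
    SchurMultiplier.isLieAbelian_of_schurMultDim_eq⟩
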